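/- arXiv:1511.01035 — 5 statements merged into one kernel-verified Lean document; each statement's English description precedes it below -/
import Mathlib

section
/- For any finite simple graph G on n vertices, ∑_{(k₁,k₂) ∈ A(G)} (k₁+k₂)/(k₁·k₂) ≤ ∑_{(k₁,k₂) ∈ A(G)} ((k₁+k₂)/(k₁·k₂)) · j_{k₁k₂}(G) ≤ n. -/
noncomputable def gdeg {n : ℕ} (G : SimpleGraph (Fin n)) (v : Fin n) : ℕ :=
  letI := Classical.decRel G.Adj
  G.degree v

noncomputable def jdv {n : ℕ} (G : SimpleGraph (Fin n)) (i k : ℕ) : ℕ :=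
  Set.ncard {e ∈ G.edgeSet | Sym2.map (gdeg G) e = s(i, k)}

noncomputable def jdvSupport {n : ℕ} (G : SimpleGraph (Fin n)) : Finset (ℕ × ℕ) :=
  (Finset.Icc 1 (n - 1) ×ˢ Finset.Icc 1 (n - 1)).filter
    (fun p => p.1 ≤ p.2 ∧ 0 < jdv G p.1 p.2)

noncomputable def degCount {n : ℕ} (G : SimpleGraph (Fin n)) (i : ℕ) : ℕ :=
  Set.ncard {v : Fin n | gdeg G v = i}

/-!
Since `(k₁ + k₂) / (k₁ k₂) = 1 / k₁ + 1 / k₂`, the weighted sum counts every edge `uv` with weight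
`1 / d(u) + 1 / d(v)`. Regrouping by vertices, each non-isolated vertex `v` collects `d(v) · 1 / d(v) = 1`,
so the sum is the number of non-isolated vertices, at most `n`. The first inequality holds termwise,
as `j_{k₁k₂} ≥ 1` on `A(G)`.
-/

open Finset

namespace SimpleGraph

variable {V : Type*} [Fintype V] [DecidableEq V] (G : SimpleGraph V) [DecidableRel G.Adj]

theorem sum_edgeFinset_sum_toFinset {M : Type*} [AddCommMonoid M] (f : V → M) :
    ∑ e ∈ G.edgeFinset, ∑ v ∈ e.toFinset, f v = ∑ v, G.degree v • f v := by
  rw [sum_comm' (t' := univ) (s' := fun v => G.incidenceFinset v)]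
  · simp only [sum_const, card_incidenceFinset_eq_degree]
  · intro e v
    simp [incidenceSet, and_comm]

theorem sum_edgeFinset_sum_inv_degree {K : Type*} [DivisionRing K] [CharZero K] :
    ∑ e ∈ G.edgeFinset, ∑ v ∈ e.toFinset, (G.degree v : K)⁻¹ = #{v | G.degree v ≠ 0} := by
  rw [sum_edgeFinset_sum_toFinset, ← sum_boole]
  refine sum_congr rfl fun v _ => ?_
  split_ifs with h
  · rw [nsmul_eq_mul, mul_inv_cancel₀ (Nat.cast_ne_zero.2 h)]
  · simp_all

end SimpleGraph

section JointDegree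

variable {n : ℕ} (G : SimpleGraph (Fin n))

theorem gdeg_eq_degree [DecidableRel G.Adj] (v : Fin n) : gdeg G v = G.degree v := by
  unfold gdeg; convert rfl

theorem gdeg_le_sub_one (v : Fin n) : gdeg G v ≤ n - 1 := by
  classical
  have := G.degree_lt_card_verts v
  rw [Fintype.card_fin, ← gdeg_eq_degree] at this
  omega

variable {G} in
theorem gdeg_pos_of_adj {a b : Fin n} (h : G.Adj a b) : 0 < gdeg G a := by
  classical
  rw [gdeg_eq_degree]
  exact G.degree_pos_iff_exists_adj a |>.2 ⟨b, h⟩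

theorem jdv_eq_card_filter [DecidableRel G.Adj] (i k : ℕ) :
    jdv G i k = #{e ∈ G.edgeFinset | e.map (gdeg G) = s(i, k)} := by
  rw [jdv, ← Set.ncard_coe_finset]
  congr 1
  ext e
  simp

noncomputable def edgeDegPair (e : Sym2 (Fin n)) : ℕ × ℕ :=
  ((e.map (gdeg G)).inf, (e.map (gdeg G)).sup)

theorem edgeDegPair_eq_iff (e : Sym2 (Fin n)) {p : ℕ × ℕ} (hp : p.1 ≤ p.2) :
    edgeDegPair G e = p ↔ e.map (gdeg G) = s(p.1, p.2) := by
  rw [← Sym2.inf_eq_inf_and_sup_eq_sup]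
  simp [edgeDegPair, Prod.ext_iff, hp]

variable [DecidableRel G.Adj]

theorem edgeDegPair_mem_jdvSupport {e : Sym2 (Fin n)} (he : e ∈ G.edgeFinset) :
    edgeDegPair G e ∈ jdvSupport G := by
  have hjdv : 0 < jdv G (edgeDegPair G e).1 (edgeDegPair G e).2 := by
    rw [jdv_eq_card_filter, card_pos]
    exact ⟨e, mem_filter.2 ⟨he, (edgeDegPair_eq_iff G e (Sym2.inf_le_sup _)).1 rfl⟩⟩
  induction e using Sym2.ind with
  | _ a b =>
    have hab : G.Adj a b := G.mem_edgeFinset.1 he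
    have := gdeg_pos_of_adj hab; have := gdeg_pos_of_adj hab.symm
    have := gdeg_le_sub_one G a; have := gdeg_le_sub_one G b
    simp only [jdvSupport, mem_filter, mem_product, mem_Icc] at hjdv ⊢
    simp only [edgeDegPair, Sym2.map_mk, Sym2.inf_mk, Sym2.sup_mk] at hjdv ⊢
    refine ⟨⟨⟨?_, ?_⟩, ?_, ?_⟩, inf_le_sup, hjdv⟩ <;> omega

theorem sum_jdvSupport_mul_jdv (w : ℕ × ℕ → ℝ) :
    ∑ p ∈ jdvSupport G, w p * jdv G p.1 p.2 = ∑ e ∈ G.edgeFinset, w (edgeDegPair G e) := by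
  rw [← sum_fiberwise_of_maps_to (fun e => edgeDegPair_mem_jdvSupport G)]
  refine sum_congr rfl fun p hp => ?_
  have hp12 : p.1 ≤ p.2 := (mem_filter.1 hp).2.1
  rw [sum_congr rfl fun e he => congrArg w (mem_filter.1 he).2, sum_const, nsmul_eq_mul,
    mul_comm, jdv_eq_card_filter]
  simp only [edgeDegPair_eq_iff G _ hp12]

theorem add_div_mul_edgeDegPair {e : Sym2 (Fin n)} (he : e ∈ G.edgeFinset) :
    ((edgeDegPair G e).1 + (edgeDegPair G e).2 : ℝ) / ((edgeDegPair G e).1 * (edgeDegPair G e).2)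
      = ∑ v ∈ e.toFinset, (G.degree v : ℝ)⁻¹ := by
  induction e using Sym2.ind with
  | _ a b =>
    have hab : G.Adj a b := G.mem_edgeFinset.1 he
    have ha : (gdeg G a : ℝ) ≠ 0 := by exact_mod_cast (gdeg_pos_of_adj hab).ne'
    have hb : (gdeg G b : ℝ) ≠ 0 := by exact_mod_cast (gdeg_pos_of_adj hab.symm).ne'
    simp only [edgeDegPair, Sym2.map_mk, Sym2.inf_mk, Sym2.sup_mk, Nat.cast_min, Nat.cast_max,
      min_add_max, min_mul_max, Sym2.toFinset_mk_eq, sum_pair hab.ne, ← gdeg_eq_degree]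
    field_simp
    ring

end JointDegree

theorem stmt2 (n : ℕ) (G : SimpleGraph (Fin n)) :
    (∑ p ∈ jdvSupport G, ((p.1 : ℝ) + (p.2 : ℝ)) / ((p.1 : ℝ) * (p.2 : ℝ)) ≤
      ∑ p ∈ jdvSupport G,
        ((p.1 : ℝ) + (p.2 : ℝ)) / ((p.1 : ℝ) * (p.2 : ℝ)) * (jdv G p.1 p.2 : ℝ)) ∧
    (∑ p ∈ jdvSupport G,
        ((p.1 : ℝ) + (p.2 : ℝ)) / ((p.1 : ℝ) * (p.2 : ℝ)) * (jdv G p.1 p.2 : ℝ) ≤ (n : ℝ)) := by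
  classical
  refine ⟨sum_le_sum fun p hp => le_mul_of_one_le_right (by positivity) ?_, ?_⟩
  · exact Nat.one_le_cast.2 (mem_filter.1 hp).2.2
  calc _ = ∑ e ∈ G.edgeFinset, ∑ v ∈ e.toFinset, (G.degree v : ℝ)⁻¹ := by
        rw [sum_jdvSupport_mul_jdv]
        exact sum_congr rfl fun e he => add_div_mul_edgeDegPair G he
    _ = #{v | G.degree v ≠ 0} := G.sum_edgeFinset_sum_inv_degree
    _ ≤ n := by exact_mod_cast (card_filter_le _ _).trans (card_fin n).le
end

section
/- For the half graphs H_n, the ratio |A(H_n)| / C(n,2) converges to 1/2 as n → ∞. -/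
/-- The half graph on `n` vertices `v₁, …, vₙ` (represented by `Fin n`, vertex `vᵢ`
corresponding to index `i - 1`), with edges `vᵢvⱼ` for `i + j > n`, `i ≠ j`. -/
def halfGraph (n : ℕ) : SimpleGraph (Fin n) :=
  SimpleGraph.fromRel (fun a b => n < (a.val + 1) + (b.val + 1))

/-!
With vertices indexed from `0`, vertex `v` of `H_n` has degree `v + 1` when `2 (v + 1) ≤ n`
and `v` otherwise. Hence the degree pairs realised by edges are exactly the `(a, b)` with
`1 ≤ a ≤ b < n` and `a + b ≥ n`, where a diagonal pair `(a, a)` occurs only for `2a = n`.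
Removing the row `b = n + 1` and shifting both coordinates down by one shows
`|A(H_{n+2})| = |A(H_n)| + n` for `n ≥ 1`, so `4 |A(H_{n+1})| = n² + 3 (n mod 2)`:
`|A(H_n)|` is `n²/4 + O(1)`, while `C(n,2) = n²/2 + O(n)`.
-/

open Finset

lemma halfGraph_adj {n : ℕ} {u v : Fin n} :
    (halfGraph n).Adj u v ↔ u ≠ v ∧ n < u.val + v.val + 2 := by
  simp only [halfGraph, SimpleGraph.fromRel_adj]
  omega

lemma gdeg_halfGraph {n : ℕ} (v : Fin n) :
    gdeg (halfGraph n) v = if 2 * (v.val + 1) ≤ n then v.val + 1 else v.val := by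
  classical
  have hneighbors : ((halfGraph n).neighborFinset v).map Fin.valEmbedding =
      (Ico (n - (v.val + 1)) n).erase v.val := by
    ext x
    simp only [Finset.mem_map, SimpleGraph.mem_neighborFinset, halfGraph_adj,
      Fin.valEmbedding_apply, mem_erase, mem_Ico]
    constructor
    · rintro ⟨w, ⟨hvw, hsum⟩, rfl⟩
      exact ⟨fun h => hvw (Fin.ext h.symm), by omega, w.isLt⟩
    · rintro ⟨hxv, hlo, hx⟩
      exact ⟨⟨x, hx⟩, ⟨fun h => hxv (congrArg Fin.val h).symm, by simp only; omega⟩, rfl⟩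
  have hv := v.isLt
  rw [gdeg, SimpleGraph.degree, ← card_map Fin.valEmbedding]
  convert congrArg card hneighbors
  split_ifs with h
  · rw [erase_eq_of_notMem (by simp only [mem_Ico]; omega), Nat.card_Ico]; omega
  · rw [card_erase_of_mem (by simp only [mem_Ico]; omega), Nat.card_Ico]; omega

lemma jdv_pos_iff {n : ℕ} (G : SimpleGraph (Fin n)) (a b : ℕ) :
    0 < jdv G a b ↔ ∃ u v, G.Adj u v ∧ s(gdeg G u, gdeg G v) = s(a, b) := by
  rw [jdv, Set.ncard_pos (Set.toFinite _)]
  simp only [Set.Nonempty, Set.mem_sep_iff, Sym2.exists, SimpleGraph.mem_edgeSet,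
    Sym2.map_mk]

lemma jdv_halfGraph_pos_iff {n a b : ℕ} (ha : 1 ≤ a) (hab : a ≤ b) (hb : b ≤ n - 1) :
    0 < jdv (halfGraph n) a b ↔ n ≤ a + b ∧ (a < b ∨ 2 * a ≤ n) := by
  rw [jdv_pos_iff]
  constructor
  · rintro ⟨u, v, hadj, hdeg⟩
    rw [halfGraph_adj, Ne, Fin.ext_iff] at hadj
    rw [Sym2.eq_iff, gdeg_halfGraph, gdeg_halfGraph] at hdeg
    split_ifs at hdeg <;> omega
  · rintro ⟨hsum, hcase⟩
    -- vertex `a - 1` has degree `a` when `2a ≤ n`, otherwise vertex `a` does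
    let u : Fin n := ⟨if 2 * a ≤ n then a - 1 else a, by split_ifs <;> omega⟩
    refine ⟨u, ⟨b, by omega⟩, ?_, ?_⟩
    · rw [halfGraph_adj, Ne, Fin.ext_iff]
      simp only [u]
      split_ifs <;> omega
    · rw [gdeg_halfGraph, gdeg_halfGraph]
      simp only [u]
      congr 1 <;> split_ifs <;> omega

def halfGraphDegreePairs (n : ℕ) : Finset (ℕ × ℕ) :=
  (Icc 1 (n - 1) ×ˢ Icc 1 (n - 1)).filter
    (fun p => p.1 ≤ p.2 ∧ n ≤ p.1 + p.2 ∧ (p.1 < p.2 ∨ 2 * p.1 ≤ n))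

lemma jdvSupport_halfGraph (n : ℕ) : jdvSupport (halfGraph n) = halfGraphDegreePairs n := by
  refine filter_congr fun p hp => and_congr_right fun hle => ?_
  simp only [mem_product, mem_Icc] at hp
  exact jdv_halfGraph_pos_iff hp.1.1 hle hp.2.2

lemma mem_halfGraphDegreePairs {n : ℕ} {p : ℕ × ℕ} :
    p ∈ halfGraphDegreePairs n ↔
      1 ≤ p.1 ∧ p.1 ≤ p.2 ∧ p.2 < n ∧ n ≤ p.1 + p.2 ∧ (p.1 < p.2 ∨ 2 * p.1 ≤ n) := by
  simp only [halfGraphDegreePairs, mem_filter, mem_product, mem_Icc]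
  omega

lemma card_halfGraphDegreePairs_add_two {n : ℕ} (hn : n ≠ 0) :
    #(halfGraphDegreePairs (n + 2)) = #(halfGraphDegreePairs n) + n := by
  have hsplit : halfGraphDegreePairs (n + 2) =
      (halfGraphDegreePairs n).map ((addRightEmbedding 1).prodMap (addRightEmbedding 1)) ∪
        (Icc 1 n).map (Function.Embedding.sectL ℕ (n + 1)) := by
    ext ⟨a, b⟩
    simp only [mem_union, Finset.mem_map, mem_halfGraphDegreePairs, mem_Icc, Prod.exists,
      Function.Embedding.sectL_apply, Function.Embedding.coe_prodMap, Prod.map_apply,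
      addRightEmbedding_apply, Prod.mk.injEq]
    constructor
    · intro h
      by_cases hb : b = n + 1
      · exact Or.inr ⟨a, by omega, rfl, hb.symm⟩
      · exact Or.inl ⟨a - 1, b - 1, by omega, by omega, by omega⟩
    · rintro (⟨a', b', h, rfl, rfl⟩ | ⟨a', h, rfl, rfl⟩) <;> omega
  rw [hsplit, card_union_of_disjoint, card_map, card_map, Nat.card_Icc, Nat.add_sub_cancel]
  rw [disjoint_left]
  rintro ⟨a, b⟩ h1 h2
  simp only [Finset.mem_map, mem_halfGraphDegreePairs, mem_Icc, Prod.exists,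
    Function.Embedding.sectL_apply, Function.Embedding.coe_prodMap, Prod.map_apply,
    addRightEmbedding_apply, Prod.mk.injEq] at h1 h2
  omega

lemma four_mul_card_halfGraphDegreePairs (n : ℕ) :
    4 * #(halfGraphDegreePairs (n + 1)) = n ^ 2 + 3 * (n % 2) := by
  induction n using Nat.twoStepInduction with
  | zero => rfl
  | one => rfl
  | more n ih _ =>
    rw [Nat.add_right_comm, card_halfGraphDegreePairs_add_two n.add_one_ne_zero, mul_add, ih,
      Nat.add_mod_right]
    ring

open Filter Topology

lemma tendsto_div_choose_two_of_sq_le {c : ℕ → ℕ} (hlow : ∀ n, n ^ 2 ≤ 4 * c (n + 1))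
    (hupp : ∀ n, 4 * c (n + 1) ≤ (n + 1) ^ 2) :
    Tendsto (fun n => (c n : ℝ) / n.choose 2) atTop (𝓝 (1 / 2)) := by
  rw [← tendsto_add_atTop_iff_nat 1]
  have hlim_low : Tendsto (fun n : ℕ => (n : ℝ) / (n + 1) / 2) atTop (𝓝 (1 / 2)) := by
    simpa using (tendsto_natCast_div_add_atTop (1 : ℝ)).div_const 2
  have hlim_upp : Tendsto (fun n : ℕ => (1 + 1 / (n : ℝ)) / 2) atTop (𝓝 (1 / 2)) := by
    simpa using ((tendsto_one_div_atTop_nhds_zero_nat (𝕜 := ℝ)).const_add 1).div_const 2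
  have hchoose (n : ℕ) : ((n + 1).choose 2 : ℝ) = (n + 1) * n / 2 := by
    rw [Nat.cast_choose_two]; push_cast; ring
  refine tendsto_of_tendsto_of_tendsto_of_le_of_le' hlim_low hlim_upp ?_ ?_ <;>
    filter_upwards [eventually_ne_atTop 0] with n hn <;>
    have hn : (n : ℝ) ≠ 0 := mod_cast hn <;>
    rw [hchoose]
  · have h : (n : ℝ) ^ 2 ≤ 4 * c (n + 1) := by exact_mod_cast hlow n
    field_simp
    nlinarith
  · have h : 4 * (c (n + 1) : ℝ) ≤ (n + 1) ^ 2 := by exact_mod_cast hupp n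
    field_simp
    nlinarith

theorem stmt5 :
    Filter.Tendsto (fun n : ℕ => ((jdvSupport (halfGraph n)).card : ℝ) / (n.choose 2 : ℝ))
      Filter.atTop (nhds (1 / 2)) := by
  simp only [jdvSupport_halfGraph]
  refine tendsto_div_choose_two_of_sq_le (fun n => ?_) (fun n => ?_) <;>
    rw [four_mul_card_halfGraphDegreePairs]
  · exact Nat.le_add_right _ _
  · rw [add_sq]
    omega
end

section
/- For every integer n ≥ 2, α_n ≤ ((n−1)/n)·α_n' + 1/n, where α_n is the optimum of the discrete relaxation and α_n' is the optimum of the continuous relaxation. -/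
open MeasureTheory

/-- The optimum `αₙ` of the discrete relaxation: the supremum (maximum) of `|A| / C(n,2)` over
all `A ⊆ Pₙ = {(i,j) : 1 ≤ i ≤ j ≤ n-1}` with `∑_{(k₁,k₂) ∈ A} (k₁+k₂)/(k₁k₂) ≤ n`. -/
noncomputable def alphaDisc (n : ℕ) : ℝ :=
  sSup {r : ℝ | ∃ A : Finset (ℕ × ℕ),
    (∀ p ∈ A, 1 ≤ p.1 ∧ p.1 ≤ p.2 ∧ p.2 ≤ n - 1) ∧
    (∑ p ∈ A, ((p.1 : ℝ) + (p.2 : ℝ)) / ((p.1 : ℝ) * (p.2 : ℝ))) ≤ (n : ℝ) ∧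
    r = (A.card : ℝ) / (n.choose 2 : ℝ)}

/-- The optimum `αₙ'` of the continuous relaxation: the supremum of `μ(A') / (n-1)²` over all
Lebesgue-measurable `A' ⊆ [1,n] × [1,n]` symmetric about the line `y = x` with
`∬_{A'} (1/x) dx dy ≤ n`. -/
noncomputable def alphaCont (n : ℕ) : ℝ :=
  sSup {r : ℝ | ∃ A' : Set (ℝ × ℝ),
    NullMeasurableSet A' (volume : Measure (ℝ × ℝ)) ∧
    A' ⊆ Set.Icc (1 : ℝ) (n : ℝ) ×ˢ Set.Icc (1 : ℝ) (n : ℝ) ∧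
    (∀ x y : ℝ, (x, y) ∈ A' ↔ (y, x) ∈ A') ∧
    (∫ p in A', 1 / p.1 ∂(volume : Measure (ℝ × ℝ))) ≤ (n : ℝ) ∧
    r = ((volume : Measure (ℝ × ℝ)) A').toReal / ((n : ℝ) - 1) ^ 2}

/-! Symmetrize a feasible discrete set `A` to `B = A ∪ swap(A)` and thicken each lattice point
`(i, j) ∈ B` into the unit square `[i, i+1) × [j, j+1) ⊆ [1, n]²`. Since `1/x ≤ 1/i` on that
square, the union is feasible for the continuous relaxation, with weighted area at most
`∑_{(i,j) ∈ A} (1/i + 1/j) ≤ n`. Its area is `|B| ≥ 2|A| - (n - 1)` because `A ∩ swap(A)`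
consists of diagonal points, so `|A| / C(n,2) ≤ (|B| + n - 1) / (n(n-1))`
`= ((n-1)/n) · |B|/(n-1)² + 1/n`. -/

open Function

noncomputable def unitSquare (p : ℕ × ℕ) : Set (ℝ × ℝ) :=
  Set.Ico (p.1 : ℝ) (p.1 + 1) ×ˢ Set.Ico (p.2 : ℝ) (p.2 + 1)

lemma measurableSet_unitSquare (p : ℕ × ℕ) : MeasurableSet (unitSquare p) :=
  measurableSet_Ico.prod measurableSet_Ico

lemma volume_unitSquare (p : ℕ × ℕ) : volume (unitSquare p) = 1 := by
  simp [unitSquare, Measure.volume_eq_prod, Measure.prod_prod, Real.volume_Ico]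

lemma pairwise_disjoint_unitSquare : Pairwise (Disjoint on unitSquare) := by
  intro p q hpq
  refine Set.disjoint_left.2 fun z hp hq => hpq (Prod.ext ?_ ?_)
  · rw [← Nat.floor_eq_on_Ico _ _ hp.1, Nat.floor_eq_on_Ico _ _ hq.1]
  · rw [← Nat.floor_eq_on_Ico _ _ hp.2, Nat.floor_eq_on_Ico _ _ hq.2]

lemma integrableOn_one_div_fst_unitSquare {p : ℕ × ℕ} (hp : 1 ≤ p.1) :
    IntegrableOn (fun z : ℝ × ℝ => 1 / z.1) (unitSquare p) := by
  refine Measure.integrableOn_of_bounded (M := 1) (by simp [volume_unitSquare])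
    (measurable_fst.const_div 1).aestronglyMeasurable ?_
  filter_upwards [self_mem_ae_restrict (measurableSet_unitSquare p)] with z hz
  have h₁ : (1 : ℝ) ≤ z.1 := le_trans (by exact_mod_cast hp) hz.1.1
  rw [Real.norm_of_nonneg (by positivity)]
  exact div_le_one_of_le₀ h₁ (by linarith)

lemma setIntegral_one_div_fst_unitSquare_le {p : ℕ × ℕ} (hp : 1 ≤ p.1) :
    ∫ z in unitSquare p, 1 / z.1 ≤ 1 / (p.1 : ℝ) :=
  calc ∫ z in unitSquare p, 1 / z.1
      ≤ ∫ _ in unitSquare p, 1 / (p.1 : ℝ) :=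
        setIntegral_mono_on (integrableOn_one_div_fst_unitSquare hp)
          (integrableOn_const (by simp [volume_unitSquare])) (measurableSet_unitSquare p)
          fun _ hz => one_div_le_one_div_of_le (by exact_mod_cast hp) hz.1.1
    _ = 1 / (p.1 : ℝ) := by simp [measureReal_def, volume_unitSquare]

noncomputable def latticeSquares (B : Finset (ℕ × ℕ)) : Set (ℝ × ℝ) :=
  ⋃ p ∈ B, unitSquare p

lemma measurableSet_latticeSquares (B : Finset (ℕ × ℕ)) : MeasurableSet (latticeSquares B) :=
  B.measurableSet_biUnion fun p _ => measurableSet_unitSquare p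

lemma volume_latticeSquares (B : Finset (ℕ × ℕ)) : volume (latticeSquares B) = B.card := by
  rw [latticeSquares, measure_biUnion_finset (pairwise_disjoint_unitSquare.set_pairwise _)
    fun p _ => measurableSet_unitSquare p]
  simp [volume_unitSquare]

lemma latticeSquares_subset_Icc_prod_Icc {B : Finset (ℕ × ℕ)} {m : ℕ}
    (hB : ∀ p ∈ B, 1 ≤ p.1 ∧ 1 ≤ p.2 ∧ p.1 < m ∧ p.2 < m) :
    latticeSquares B ⊆ Set.Icc (1 : ℝ) m ×ˢ Set.Icc (1 : ℝ) m := by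
  simp only [latticeSquares, Set.iUnion_subset_iff]
  intro p hp z ⟨⟨hx₁, hx₂⟩, hy₁, hy₂⟩
  obtain ⟨h₁, h₂, h₃, h₄⟩ := hB p hp
  have c₁ : (1 : ℝ) ≤ p.1 := by exact_mod_cast h₁
  have c₂ : (1 : ℝ) ≤ p.2 := by exact_mod_cast h₂
  have c₃ : (p.1 : ℝ) + 1 ≤ m := by exact_mod_cast h₃
  have c₄ : (p.2 : ℝ) + 1 ≤ m := by exact_mod_cast h₄
  exact ⟨⟨by linarith, by linarith⟩, by linarith, by linarith⟩

lemma mem_latticeSquares_comm {B : Finset (ℕ × ℕ)} (hB : ∀ p ∈ B, p.swap ∈ B) (x y : ℝ) :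
    (x, y) ∈ latticeSquares B ↔ (y, x) ∈ latticeSquares B := by
  suffices ∀ z ∈ latticeSquares B, z.swap ∈ latticeSquares B from ⟨this (x, y), this (y, x)⟩
  simp only [latticeSquares, Set.mem_iUnion]
  rintro z ⟨p, hp, hz⟩
  exact ⟨p.swap, hB p hp, hz.2, hz.1⟩

lemma setIntegral_one_div_fst_latticeSquares_le {B : Finset (ℕ × ℕ)} (hB : ∀ p ∈ B, 1 ≤ p.1) :
    ∫ z in latticeSquares B, 1 / z.1 ≤ ∑ p ∈ B, 1 / (p.1 : ℝ) := by
  rw [latticeSquares, integral_biUnion_finset B (fun p _ => measurableSet_unitSquare p)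
    (pairwise_disjoint_unitSquare.set_pairwise _)
    fun p hp => integrableOn_one_div_fst_unitSquare (hB p hp)]
  exact Finset.sum_le_sum fun p hp => setIntegral_one_div_fst_unitSquare_le (hB p hp)

section swapClosure

variable {α : Type*} [DecidableEq α]

def swapClosure (A : Finset (α × α)) : Finset (α × α) :=
  A ∪ A.image Prod.swap

lemma swap_mem_swapClosure {A : Finset (α × α)} {p : α × α} (hp : p ∈ swapClosure A) :
    p.swap ∈ swapClosure A := by
  rcases Finset.mem_union.1 hp with h | h
  · exact Finset.mem_union_right _ (Finset.mem_image_of_mem _ h)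
  · obtain ⟨q, hq, rfl⟩ := Finset.mem_image.1 h
    exact Finset.mem_union_left _ (by rwa [Prod.swap_swap])

lemma forall_mem_swapClosure {A : Finset (α × α)} {P : α × α → Prop}
    (hA : ∀ p ∈ A, P p ∧ P p.swap) : ∀ p ∈ swapClosure A, P p := by
  intro p hp
  rcases Finset.mem_union.1 hp with h | h
  · exact (hA p h).1
  · obtain ⟨q, hq, rfl⟩ := Finset.mem_image.1 h
    exact (hA q hq).2

lemma sum_swapClosure_le {M : Type*} [AddCommMonoid M] [PartialOrder M] [IsOrderedAddMonoid M]
    (A : Finset (α × α)) {f : α × α → M} (hf : ∀ p, 0 ≤ f p) :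
    ∑ p ∈ swapClosure A, f p ≤ ∑ p ∈ A, (f p + f p.swap) :=
  calc ∑ p ∈ swapClosure A, f p
      ≤ ∑ p ∈ swapClosure A, f p + ∑ p ∈ A ∩ A.image Prod.swap, f p :=
        le_add_of_nonneg_right (Finset.sum_nonneg fun p _ => hf p)
    _ = ∑ p ∈ A, f p + ∑ p ∈ A.image Prod.swap, f p := Finset.sum_union_inter
    _ = ∑ p ∈ A, (f p + f p.swap) := by
        rw [Finset.sum_image fun p _ q _ h => Prod.swap_injective h, Finset.sum_add_distrib]

end swapClosure

lemma card_swapClosure {A : Finset (ℕ × ℕ)} {m : ℕ}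
    (hA : ∀ p ∈ A, 1 ≤ p.1 ∧ p.1 ≤ p.2 ∧ p.2 ≤ m) :
    2 * A.card ≤ (swapClosure A).card + m := by
  have hdiag : A ∩ A.image Prod.swap ⊆ (Finset.Icc 1 m).image fun i => (i, i) := by
    intro p hp
    obtain ⟨hpA, q, hqA, rfl⟩ := Finset.mem_inter.1 hp |>.imp_right Finset.mem_image.1
    have := hA _ hpA
    have := hA q hqA
    simp only [Prod.fst_swap, Prod.snd_swap] at *
    exact Finset.mem_image.2 ⟨q.2, Finset.mem_Icc.2 (by omega), Prod.ext rfl (by simp; omega)⟩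
  have hinter := (Finset.card_le_card hdiag).trans Finset.card_image_le
  have hunion := Finset.card_union_add_card_inter A (A.image Prod.swap)
  rw [Finset.card_image_of_injective _ Prod.swap_injective] at hunion
  rw [Nat.card_Icc] at hinter
  unfold swapClosure
  omega

lemma le_alphaCont {n : ℕ} {A' : Set (ℝ × ℝ)} (hmeas : NullMeasurableSet A')
    (hsub : A' ⊆ Set.Icc (1 : ℝ) n ×ˢ Set.Icc (1 : ℝ) n)
    (hsymm : ∀ x y : ℝ, (x, y) ∈ A' ↔ (y, x) ∈ A') (hint : ∫ p in A', 1 / p.1 ≤ n) :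
    (volume A').toReal / ((n : ℝ) - 1) ^ 2 ≤ alphaCont n := by
  refine le_csSup ⟨(volume (Set.Icc (1 : ℝ) n ×ˢ Set.Icc (1 : ℝ) n)).toReal / ((n : ℝ) - 1) ^ 2, ?_⟩
    ⟨A', hmeas, hsub, hsymm, hint, rfl⟩
  rintro r ⟨B, -, hB, -, -, rfl⟩
  gcongr
  exact (isCompact_Icc.prod isCompact_Icc).measure_lt_top.ne

lemma alphaCont_nonneg (n : ℕ) : 0 ≤ alphaCont n := by
  simpa using le_alphaCont (n := n) (A' := ∅) nullMeasurableSet_empty (Set.empty_subset _)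
    (by simp) (by simp)

lemma div_choose_two_le {n : ℕ} (hn : 2 ≤ n) {a b c : ℝ} (hab : 2 * a ≤ b + (n - 1))
    (hbc : b / ((n : ℝ) - 1) ^ 2 ≤ c) :
    a / n.choose 2 ≤ ((n : ℝ) - 1) / n * c + 1 / n := by
  have hn' : (2 : ℝ) ≤ n := by exact_mod_cast hn
  have hn₁ : (0 : ℝ) < n - 1 := by linarith
  calc a / n.choose 2 ≤ (b + (n - 1)) / (n * (n - 1)) := by
        rw [Nat.cast_choose_two, div_le_div_iff₀ (by positivity) (by positivity)]
        nlinarith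
    _ = ((n : ℝ) - 1) / n * (b / ((n : ℝ) - 1) ^ 2) + 1 / n := by field_simp
    _ ≤ ((n : ℝ) - 1) / n * c + 1 / n := by gcongr

lemma card_div_choose_two_le_alphaCont {n : ℕ} (hn : 2 ≤ n) {A : Finset (ℕ × ℕ)}
    (hA : ∀ p ∈ A, 1 ≤ p.1 ∧ p.1 ≤ p.2 ∧ p.2 ≤ n - 1)
    (hsum : ∑ p ∈ A, ((p.1 : ℝ) + p.2) / (p.1 * p.2) ≤ n) :
    (A.card : ℝ) / n.choose 2 ≤ ((n : ℝ) - 1) / n * alphaCont n + 1 / n := by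
  set B := swapClosure A
  have hB : ∀ p ∈ B, 1 ≤ p.1 ∧ 1 ≤ p.2 ∧ p.1 < n ∧ p.2 < n :=
    forall_mem_swapClosure fun p hp => by
      have := hA p hp
      simp only [Prod.fst_swap, Prod.snd_swap]
      omega
  have hint : ∫ z in latticeSquares B, 1 / z.1 ≤ n :=
    calc ∫ z in latticeSquares B, 1 / z.1
        ≤ ∑ p ∈ B, 1 / (p.1 : ℝ) :=
          setIntegral_one_div_fst_latticeSquares_le fun p hp => (hB p hp).1
      _ ≤ ∑ p ∈ A, (1 / (p.1 : ℝ) + 1 / (p.2 : ℝ)) := sum_swapClosure_le A fun p => by positivity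
      _ = ∑ p ∈ A, ((p.1 : ℝ) + p.2) / (p.1 * p.2) := by
          refine Finset.sum_congr rfl fun p hp => ?_
          have h₁ : (1 : ℝ) ≤ p.1 := by exact_mod_cast (hA p hp).1
          have h₂ : (1 : ℝ) ≤ p.2 := by exact_mod_cast (hA p hp).1.trans (hA p hp).2.1
          field_simp
          ring
      _ ≤ n := hsum
  have hcont : (B.card : ℝ) / ((n : ℝ) - 1) ^ 2 ≤ alphaCont n := by
    simpa [volume_latticeSquares] using
      le_alphaCont (measurableSet_latticeSquares B).nullMeasurableSet
        (latticeSquares_subset_Icc_prod_Icc hB)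
        (mem_latticeSquares_comm fun _ => swap_mem_swapClosure) hint
  have hcard : 2 * (A.card : ℝ) ≤ B.card + (n - 1) := by
    rw [← Nat.cast_pred (by omega)]
    exact_mod_cast card_swapClosure hA
  exact div_choose_two_le hn hcard hcont

theorem stmt7 (n : ℕ) (hn : 2 ≤ n) :
    alphaDisc n ≤ (((n : ℝ) - 1) / (n : ℝ)) * alphaCont n + 1 / (n : ℝ) := by
  have hcoef : 0 ≤ ((n : ℝ) - 1) / n := div_nonneg (by simp; omega) n.cast_nonneg
  refine Real.sSup_le ?_ (by have := alphaCont_nonneg n; positivity)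
  rintro r ⟨A, hA, hsum, rfl⟩
  exact card_div_choose_two_le_alphaCont hn hA hsum
end

section
/- Let n ≥ 1 be real and c > 0 with nc ≥ 2 and x₁(c) = n/(nc−1) ≥ 1. Then the double integral of 1/x over A_c with respect to two-dimensional Lebesgue measure equals (n − 2/c)·log(nc − 1); that is, ∬_{A_c} (1/x) dx dy = (n − 2/c)·log(nc − 1). -/
/-
For `x, y > 0` one has `1/x + 1/y ≤ c` iff `c x > 1` and `y ≥ φ x := x / (c x - 1)`, and `φ` is
a decreasing involution of `(1/c, ∞)` with `φ n = x₁`. Hence, under the hypotheses, `A_c` is the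
region `x₁ ≤ x ≤ n, φ x ≤ y ≤ n` (the constraints `x, y ≥ 1` are then automatic), and Fubini gives
`∫_{x₁}^n (n - φ x) / x dx = ∫_{x₁}^n (n/x - 1/(c x - 1)) dx
  = n log (n / x₁) - c⁻¹ log ((c n - 1) / (c x₁ - 1))`,
which is `(n - 2/c) log (n c - 1)` because `n / x₁ = n c - 1` and `c x₁ - 1 = 1 / (n c - 1)`.
-/

open MeasureTheory

/-- The sublevel set `A_c = {(x,y) ∈ [1,n]² : 1/x + 1/y ≤ c}`. -/
def Ac (n c : ℝ) : Set (ℝ × ℝ) :=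
  {p : ℝ × ℝ | p.1 ∈ Set.Icc 1 n ∧ p.2 ∈ Set.Icc 1 n ∧ 1 / p.1 + 1 / p.2 ≤ c}

open Set Real

theorem setIntegral_comp_fst_of_mem_Icc {s : Set ℝ} {a b F : ℝ → ℝ} (hs : MeasurableSet s)
    (ha : Measurable a) (hb : Measurable b) (hab : ∀ x ∈ s, a x ≤ b x)
    (hF : IntegrableOn (fun p : ℝ × ℝ => F p.1) {p | p.1 ∈ s ∧ p.2 ∈ Icc (a p.1) (b p.1)}) :
    ∫ p in {p : ℝ × ℝ | p.1 ∈ s ∧ p.2 ∈ Icc (a p.1) (b p.1)}, F p.1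
      = ∫ x in s, (b x - a x) * F x := by
  set S := {p : ℝ × ℝ | p.1 ∈ s ∧ p.2 ∈ Icc (a p.1) (b p.1)}
  have hS : MeasurableSet S :=
    (measurable_fst hs).inter ((measurableSet_le (ha.comp measurable_fst) measurable_snd).inter
      (measurableSet_le measurable_snd (hb.comp measurable_fst)))
  have hslice : ∀ x, ∫ y, S.indicator (fun p => F p.1) (x, y)
      = s.indicator (fun x => (b x - a x) * F x) x := by
    intro x
    by_cases hx : x ∈ s
    · have hsection : ∀ y, S.indicator (fun p => F p.1) (x, y)
          = (Icc (a x) (b x)).indicator (fun _ => F x) y := fun y => by simp [S, indicator, hx]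
      simp_rw [hsection]
      rw [integral_indicator_const _ measurableSet_Icc, Real.volume_real_Icc_of_le (hab x hx),
        indicator_of_mem hx, smul_eq_mul]
    · simp [S, indicator, hx]
  rw [← integral_indicator hS, Measure.volume_eq_prod,
    integral_prod _ ((integrable_indicator_iff hS).2 hF), ← integral_indicator hs]
  simp_rw [hslice]

theorem one_div_add_one_div_le_iff {x y c : ℝ} (hx : 0 < x) (hy : 0 < y) :
    1 / x + 1 / y ≤ c ↔ 1 < c * x ∧ x / (c * x - 1) ≤ y := by
  constructor
  · intro h
    have hcx : 1 < c * x := (div_lt_iff₀ hx).1 (by linarith [one_div_pos.2 hy])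
    refine ⟨hcx, (div_le_iff₀ (by linarith)).2 ?_⟩
    rw [div_add_div _ _ hx.ne' hy.ne', div_le_iff₀ (mul_pos hx hy)] at h
    nlinarith
  · rintro ⟨hcx, h⟩
    rw [div_le_iff₀ (by linarith)] at h
    rw [div_add_div _ _ hx.ne' hy.ne', div_le_iff₀ (mul_pos hx hy)]
    nlinarith

theorem div_mul_sub_one_le_comm {c x y : ℝ} (hx : 1 < c * x) (hy : 1 < c * y) :
    x / (c * x - 1) ≤ y ↔ y / (c * y - 1) ≤ x := by
  rw [div_le_iff₀ (by linarith), div_le_iff₀ (by linarith)]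
  constructor <;> intro h <;> linarith

theorem Ac_eq {n c : ℝ} (hnc : 2 ≤ n * c) (hx1 : 1 ≤ n / (n * c - 1)) :
    Ac n c = {p | p.1 ∈ Icc (n / (n * c - 1)) n ∧ p.2 ∈ Icc (p.1 / (c * p.1 - 1)) n} := by
  have hnc1 : 0 < n * c - 1 := by linarith
  have hcn : n * c - 1 ≤ n := by simpa using (le_div_iff₀ hnc1).1 hx1
  ext ⟨x, y⟩
  simp only [Ac, mem_ofPred_eq, mem_Icc]
  constructor
  · rintro ⟨⟨hx, hxn⟩, ⟨hy, hyn⟩, h⟩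
    obtain ⟨hcx, hy'⟩ := (one_div_add_one_div_le_iff (by linarith) (by linarith)).1 h
    have hx₁ := (div_mul_sub_one_le_comm hcx (by linarith)).1 (hy'.trans hyn)
    exact ⟨⟨by rwa [mul_comm n c], hxn⟩, hy', hyn⟩
  · rintro ⟨⟨hx, hxn⟩, hy, hyn⟩
    have hx1' : 1 ≤ x := hx1.trans hx
    rw [div_le_iff₀ hnc1] at hx
    have hcx : 1 < c * x := by nlinarith
    have hy1 : 1 ≤ y := by
      refine le_trans ((le_div_iff₀ (by linarith)).2 ?_) hy
      rcases le_total c 1 with h | h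
      · nlinarith
      · nlinarith [mul_le_mul_of_nonneg_right hxn (sub_nonneg.2 h)]
    exact ⟨⟨hx1', hxn⟩, ⟨hy1, hyn⟩,
      (one_div_add_one_div_le_iff (by linarith) (by linarith)).2 ⟨hcx, hy⟩⟩

theorem integral_sub_div_mul_one_div {m c a b : ℝ} (hc : 0 < c) (ha : 1 < c * a)
    (hb : 1 < c * b) :
    ∫ x in a..b, (m - x / (c * x - 1)) * (1 / x)
      = m * log (b / a) - c⁻¹ * log ((c * b - 1) / (c * a - 1)) := by
  have hpos : ∀ x ∈ uIcc a b, 0 < x ∧ 0 < c * x - 1 := fun x hx => by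
    rcases min_le_iff.1 hx.1 with h | h
    · exact ⟨by nlinarith, by nlinarith⟩
    · exact ⟨by nlinarith, by nlinarith⟩
  have hderiv : ∀ x ∈ uIcc a b, HasDerivAt (fun x => m * log x - c⁻¹ * log (c * x - 1))
      ((m - x / (c * x - 1)) * (1 / x)) x := by
    intro x hx
    obtain ⟨hx0, hcx⟩ := hpos x hx
    have : HasDerivAt (fun x => m * log x - c⁻¹ * log (c * x - 1))
        (m * x⁻¹ - c⁻¹ * (c * 1 / (c * x - 1))) x :=
      ((hasDerivAt_log hx0.ne').const_mul m).sub
        (((((hasDerivAt_id' x).const_mul c).sub_const 1).log hcx.ne').const_mul c⁻¹)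
    convert this using 1
    field_simp
  have hcont : ContinuousOn (fun x => (m - x / (c * x - 1)) * (1 / x)) (uIcc a b) := by
    refine ContinuousOn.mul (continuousOn_const.sub (continuousOn_id.div (by fun_prop) ?_))
      (continuousOn_const.div continuousOn_id ?_)
    · exact fun x hx => (hpos x hx).2.ne'
    · exact fun x hx => (hpos x hx).1.ne'
  rw [intervalIntegral.integral_eq_sub_of_hasDerivAt hderiv hcont.intervalIntegrable,
    log_div (by nlinarith) (by nlinarith), log_div (by linarith) (by linarith)]
  ring

theorem integrableOn_one_div_fst_Icc_prod {a b a' b' : ℝ} (ha : 0 < a) :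
    IntegrableOn (fun p : ℝ × ℝ => 1 / p.1) (Icc a b ×ˢ Icc a' b') :=
  ContinuousOn.integrableOn_compact (isCompact_Icc.prod isCompact_Icc)
    (continuousOn_const.div continuous_fst.continuousOn fun _ hp => (ha.trans_le hp.1.1).ne')

theorem stmt11_general (n c : ℝ) (hc : 0 < c) (hnc : 2 ≤ n * c)
    (hx1 : 1 ≤ n / (n * c - 1)) :
    (∫ p in Ac n c, 1 / p.1 ∂(volume : Measure (ℝ × ℝ))) =
      (n - 2 / c) * Real.log (n * c - 1) := by
  have hnc1 : 0 < n * c - 1 := by linarith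
  have hn : 0 < n := pos_of_mul_pos_left (by linarith) hc.le
  have hx₁n : n / (n * c - 1) ≤ n := div_le_self hn.le (by linarith)
  have hcx₁ : c * (n / (n * c - 1)) - 1 = (n * c - 1)⁻¹ := by
    rw [← mul_div_assoc, div_sub_one hnc1.ne', mul_comm c n, sub_sub_cancel, one_div]
  have hcx₁_pos : 1 < c * (n / (n * c - 1)) := by linarith [inv_pos.2 hnc1]
  have hbound : ∀ x ∈ Icc (n / (n * c - 1)) n, x / (c * x - 1) ≤ n := fun x hx =>
    (div_mul_sub_one_le_comm (hcx₁_pos.trans_le (by gcongr; exact hx.1)) (by linarith)).2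
      (by rw [mul_comm]; exact hx.1)
  have hint : IntegrableOn (fun p : ℝ × ℝ => 1 / p.1) (Ac n c) :=
    (integrableOn_one_div_fst_Icc_prod one_pos).mono_set fun p hp => ⟨hp.1, hp.2.1⟩
  rw [Ac_eq hnc hx1] at hint ⊢
  calc _ = ∫ x in Icc (n / (n * c - 1)) n, (n - x / (c * x - 1)) * (1 / x) :=
        setIntegral_comp_fst_of_mem_Icc (a := fun x => x / (c * x - 1)) (b := fun _ => n)
          measurableSet_Icc (by fun_prop) measurable_const hbound hint
    _ = ∫ x in n / (n * c - 1)..n, (n - x / (c * x - 1)) * (1 / x) := by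
        rw [integral_Icc_eq_integral_Ioc, intervalIntegral.integral_of_le hx₁n]
    _ = n * log (n * c - 1) - c⁻¹ * log ((n * c - 1) ^ 2) := by
        rw [integral_sub_div_mul_one_div hc hcx₁_pos (by linarith), hcx₁, div_div_cancel₀ hn.ne',
          mul_comm c n, div_inv_eq_mul, sq]
    _ = (n - 2 / c) * log (n * c - 1) := by
        rw [log_pow]
        ring

theorem stmt11 (n c : ℝ) (hn : 1 ≤ n) (hc : 0 < c) (hnc : 2 ≤ n * c)
    (hx1 : 1 ≤ n / (n * c - 1)) :
    (∫ p in Ac n c, 1 / p.1 ∂(volume : Measure (ℝ × ℝ))) =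
      (n - 2 / c) * Real.log (n * c - 1) :=
  stmt11_general n c hc hnc hx1
end

section
/- Let Y, Z, S, M be nonnegative real numbers satisfying S ≤ 1, S ≤ M ≤ (1+S)/2, and Y + Z² ≤ M(1−M) + (2M−1)/2. Then Y + √M · Z · √(1−S) ≤ 13/24. -/
/-!
By AM–GM the cross term satisfies `√(M(1-S)) · Z ≤ M(1-S)/4 + Z²`, and the `Z²` is absorbed by the
constraint on `Y + Z²`. Since `2M - 1 ≤ S`, we have `M(1-S) ≤ 2M(1-M)`, so everything is bounded by
`(3/2)·M(1-M) + M - 1/2 = 13/24 - (6M-5)²/24`, which is maximal at `M = 5/6`.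
-/

open Real

lemma mul_le_sq_div_four_add_sq (a b : ℝ) : a * b ≤ a ^ 2 / 4 + b ^ 2 := by
  nlinarith [sq_nonneg (a / 2 - b)]

lemma sqrt_mul_le_div_four_add_sq {a : ℝ} (ha : 0 ≤ a) (b : ℝ) : √a * b ≤ a / 4 + b ^ 2 := by
  simpa only [sq_sqrt ha] using mul_le_sq_div_four_add_sq (√a) b

lemma mul_one_sub_le_two_mul_mul_one_sub {M S : ℝ} (hM : 0 ≤ M) (hMS : M ≤ (1 + S) / 2) :
    M * (1 - S) ≤ 2 * M * (1 - M) := by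
  nlinarith

lemma three_halves_mul_mul_one_sub_add_le (M : ℝ) :
    3 / 2 * (M * (1 - M)) + (2 * M - 1) / 2 ≤ 13 / 24 := by
  nlinarith [sq_nonneg (6 * M - 5)]

theorem stmt18_general (Y Z S M : ℝ) (hM : 0 ≤ M)
    (hS1 : S ≤ 1) (hM2 : M ≤ (1 + S) / 2)
    (hYZ : Y + Z ^ 2 ≤ M * (1 - M) + (2 * M - 1) / 2) :
    Y + Real.sqrt M * Z * Real.sqrt (1 - S) ≤ 13 / 24 := by
  have hcross : √M * Z * √(1 - S) ≤ M * (1 - S) / 4 + Z ^ 2 := by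
    rw [mul_right_comm, ← sqrt_mul hM]
    exact sqrt_mul_le_div_four_add_sq (mul_nonneg hM (by linarith)) Z
  have hprod := mul_one_sub_le_two_mul_mul_one_sub hM hM2
  have hquad := three_halves_mul_mul_one_sub_add_le M
  linarith

theorem stmt18 (Y Z S M : ℝ) (hY : 0 ≤ Y) (hZ : 0 ≤ Z) (hS : 0 ≤ S) (hM : 0 ≤ M)
    (hS1 : S ≤ 1) (hSM : S ≤ M) (hM2 : M ≤ (1 + S) / 2)
    (hYZ : Y + Z ^ 2 ≤ M * (1 - M) + (2 * M - 1) / 2) :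
    Y + Real.sqrt M * Z * Real.sqrt (1 - S) ≤ 13 / 24 :=
  stmt18_general Y Z S M hM hS1 hM2 hYZ
end
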